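/- Let G be a nonempty connected simple graph, and for a vertex x let N(x) denote its set of neighbors in G. Then G is a Boolean graph (i.e., G is isomorphic to the zero-divisor graph Γ(R) of some Boolean ring R) if and only if the following four conditions hold: (1) G is uniquely determined: for all vertices x, y, N(x) = N(y) implies x = y; (2) G is uniquely complemented: for every vertex x there exists a vertex y with x ⊥ y, and whenever x ⊥ y and x ⊥ z one has N(y) = N(z), where x ⊥ y means that x and y are adjacent and no vertex of G is adjacent to both x and y; (3) for all vertices x, y with N(x) ∩ N(y) ≠ ∅, there exists a vertex z with N(z) = N(x) ∩ N(y); (4) there exists a Boolean semigroup S (a commutative semigroup with zero in which x·x = x for all x) such that Γ(S) is isomorphic to G. -/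

import Mathlib

universe u v w
/-- A commutative semigroup with a zero element `0` satisfying `0 * a = 0`. -/
class CommSemigroupWithZero (S : Type u) extends CommSemigroup S, Zero S where
  zero_mul' : ∀ a : S, 0 * a = 0

/-- The zero-divisor graph of `S`, as a simple graph on all of `S`:
distinct nonzero `x, y` are adjacent iff `x * y = 0`.  (The element `0` and the
non-zero-divisors are isolated vertices, so adjacency, end vertices and cycles
are exactly those of `Γ(S)`.) -/
def zdGraph (S : Type u) [CommSemigroupWithZero S] : SimpleGraph S where
  Adj x y := x ≠ y ∧ x * y = 0 ∧ x ≠ 0 ∧ y ≠ 0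
  symm := by
    constructor
    rintro x y ⟨h1, h2, h3, h4⟩
    exact ⟨h1.symm, by rwa [mul_comm], h4, h3⟩
  loopless := by
    constructor
    intro x h
    exact h.1 rfl

/-- `x` is a vertex of `Γ(S)`: a nonzero zero-divisor. -/
def IsVertex (S : Type u) [CommSemigroupWithZero S] (x : S) : Prop :=
  x ≠ 0 ∧ ∃ y : S, y ≠ 0 ∧ x * y = 0

/-- `x` is an end vertex of `Γ(S)`: it has exactly one neighbour. -/
def IsEndVertex (S : Type u) [CommSemigroupWithZero S] (x : S) : Prop :=
  ∃! y : S, (zdGraph S).Adj x y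
/-- The zero-divisor graph of `S` on its vertex set (the nonzero zero-divisors). -/
def zdvGraph (S : Type u) [CommSemigroupWithZero S] :
    SimpleGraph {x : S // x ≠ 0 ∧ ∃ y : S, y ≠ 0 ∧ x * y = 0} where
  Adj a b := a ≠ b ∧ (a : S) * (b : S) = 0
  symm := by
    constructor
    rintro a b ⟨h1, h2⟩
    exact ⟨h1.symm, by rwa [mul_comm]⟩
  loopless := by
    constructor
    intro a h
    exact h.1 rfl

/-- `G` is (isomorphic to) the zero-divisor graph of some commutative semigroup with zero. -/
def IsZDGraphOf {α : Type v} (G : SimpleGraph α) : Prop :=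
  ∃ (S : Type u) (inst : CommSemigroupWithZero S), Nonempty ((@zdvGraph S inst) ≃g G)

/-- The zero-divisor graph of a Boolean ring `R`, on its vertex set
(the nonzero zero-divisors). -/
def zdvGraphRing (R : Type u) [BooleanRing R] :
    SimpleGraph {x : R // x ≠ 0 ∧ ∃ y : R, y ≠ 0 ∧ x * y = 0} where
  Adj a b := a ≠ b ∧ (a : R) * (b : R) = 0
  symm := by
    constructor
    rintro a b ⟨h1, h2⟩
    exact ⟨h1.symm, by rwa [mul_comm]⟩
  loopless := by
    constructor
    intro a h
    exact h.1 rfl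

/-- `x ⊥ y` : `x` and `y` are adjacent in `G` and no vertex of `G` is adjacent to both,
i.e. the edge `x-y` lies on no triangle. -/
def Perp {α : Type v} (G : SimpleGraph α) (x y : α) : Prop :=
  G.Adj x y ∧ ∀ z : α, ¬ (G.Adj x z ∧ G.Adj y z)

/-!
Adjoin an identity to the Boolean semigroup `S`. The elements `0`, `1` and the vertices of `Γ(S)`
then form a submonoid, a meet-semilattice with products as meets. Compare its elements through
the sets of vertices they annihilate: if `a` has a complement `a'` and every vertex killed by `a`
is killed by `c`, then `c * a` and `c` kill the same vertices, so condition (1) turns the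
order into reverse inclusion of annihilators. Condition (3) then supplies joins and (2)
complements, while distributivity holds in any case. The resulting Boolean algebra, read as a
Boolean ring, has the vertices of `Γ(S)` as its nonzero zero-divisors, with the same products.
Conversely, in a Boolean ring the complement of `a` is `1 + a`, and `a + b + a * b` realizes (3).
-/

namespace SimpleGraph

variable {α β : Type*} {G : SimpleGraph α} {H : SimpleGraph β}

def IsUniquelyDetermined (G : SimpleGraph α) : Prop :=
  ∀ x y : α, G.neighborSet x = G.neighborSet y → x = y

def IsComplemented (G : SimpleGraph α) : Prop :=
  ∀ x : α, ∃ y : α, Perp G x y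

def IsUniquelyComplemented (G : SimpleGraph α) : Prop :=
  G.IsComplemented ∧
    ∀ x y z : α, Perp G x y → Perp G x z → G.neighborSet y = G.neighborSet z

def IsNeighborSetInterClosed (G : SimpleGraph α) : Prop :=
  ∀ x y : α, (G.neighborSet x ∩ G.neighborSet y).Nonempty →
    ∃ z : α, G.neighborSet z = G.neighborSet x ∩ G.neighborSet y

theorem Iso.preimage_neighborSet (e : G ≃g H) (x : α) :
    e ⁻¹' H.neighborSet (e x) = G.neighborSet x :=
  Set.ext fun _ => e.map_adj_iff

theorem Iso.neighborSet_eq_neighborSet_iff (e : G ≃g H) {x y : α} :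
    H.neighborSet (e x) = H.neighborSet (e y) ↔ G.neighborSet x = G.neighborSet y := by
  rw [← e.preimage_neighborSet x, ← e.preimage_neighborSet y]
  exact (Set.preimage_injective.mpr e.surjective).eq_iff.symm

theorem Iso.map_perp_iff (e : G ≃g H) {x y : α} : Perp H (e x) (e y) ↔ Perp G x y := by
  rw [Perp, Perp, e.surjective.forall]
  simp only [e.map_adj_iff]

theorem IsUniquelyDetermined.of_iso (hG : G.IsUniquelyDetermined) (e : G ≃g H) :
    H.IsUniquelyDetermined := by
  intro x y hxy
  obtain ⟨x, rfl⟩ := e.surjective x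
  obtain ⟨y, rfl⟩ := e.surjective y
  rw [hG x y (e.neighborSet_eq_neighborSet_iff.mp hxy)]

theorem IsComplemented.of_iso (hG : G.IsComplemented) (e : G ≃g H) : H.IsComplemented :=
  e.surjective.forall.mpr fun x =>
    let ⟨y, hxy⟩ := hG x
    ⟨e y, e.map_perp_iff.mpr hxy⟩

theorem IsUniquelyComplemented.of_iso (hG : G.IsUniquelyComplemented) (e : G ≃g H) :
    H.IsUniquelyComplemented := by
  refine ⟨hG.1.of_iso e, ?_⟩
  simp only [e.surjective.forall, e.map_perp_iff, e.neighborSet_eq_neighborSet_iff]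
  exact hG.2

theorem IsNeighborSetInterClosed.of_iso (hG : G.IsNeighborSetInterClosed) (e : G ≃g H) :
    H.IsNeighborSetInterClosed := by
  intro x y ⟨w, hw⟩
  obtain ⟨x, rfl⟩ := e.surjective x
  obtain ⟨y, rfl⟩ := e.surjective y
  obtain ⟨w, rfl⟩ := e.surjective w
  rw [← Set.mem_preimage, Set.preimage_inter, e.preimage_neighborSet,
    e.preimage_neighborSet] at hw
  obtain ⟨z, hz⟩ := hG x y ⟨w, hw⟩
  refine ⟨e z, Set.preimage_injective.mpr e.surjective ?_⟩
  rw [Set.preimage_inter, e.preimage_neighborSet, e.preimage_neighborSet,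
    e.preimage_neighborSet, hz]

end SimpleGraph

instance CommMonoidWithZero.toCommSemigroupWithZero {T : Type u} [CommMonoidWithZero T] :
    CommSemigroupWithZero T where
  zero_mul' := zero_mul

section ZeroDivisorGraph

variable {S : Type u} [CommSemigroupWithZero S]

abbrev ZDVertex (S : Type u) [CommSemigroupWithZero S] : Type u :=
  {x : S // x ≠ 0 ∧ ∃ y : S, y ≠ 0 ∧ x * y = 0}

def vertexAnn (x : S) : Set (ZDVertex S) := {v | x * v = 0}

theorem mem_vertexAnn {x : S} {v : ZDVertex S} : v ∈ vertexAnn x ↔ x * v = 0 := Iff.rfl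

theorem zdvGraph_adj_iff (hB : ∀ a : S, a * a = a) {a b : ZDVertex S} :
    (zdvGraph S).Adj a b ↔ (a : S) * b = 0 := by
  refine ⟨And.right, fun h => ⟨?_, h⟩⟩
  rintro rfl
  exact a.2.1 (by rwa [hB] at h)

theorem zdvGraph_neighborSet (hB : ∀ a : S, a * a = a) (a : ZDVertex S) :
    (zdvGraph S).neighborSet a = vertexAnn (a : S) :=
  Set.ext fun _ => zdvGraph_adj_iff hB

theorem perp_zdvGraph_iff (hB : ∀ a : S, a * a = a) {a b : ZDVertex S} :
    Perp (zdvGraph S) a b ↔ (a : S) * b = 0 ∧ Disjoint (vertexAnn (a : S)) (vertexAnn b) := by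
  simp only [Perp, zdvGraph_adj_iff hB, Set.disjoint_left, mem_vertexAnn, not_and]

theorem zdvGraph_isUniquelyDetermined_iff (hB : ∀ a : S, a * a = a) :
    (zdvGraph S).IsUniquelyDetermined ↔
      Function.Injective fun a : ZDVertex S => vertexAnn (a : S) := by
  simp only [SimpleGraph.IsUniquelyDetermined, zdvGraph_neighborSet hB]
  rfl

theorem zdvGraph_isNeighborSetInterClosed_iff (hB : ∀ a : S, a * a = a) :
    (zdvGraph S).IsNeighborSetInterClosed ↔ ∀ a b : ZDVertex S,
      (vertexAnn (a : S) ∩ vertexAnn (b : S)).Nonempty →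
        ∃ c : ZDVertex S, vertexAnn (c : S) = vertexAnn (a : S) ∩ vertexAnn (b : S) := by
  simp only [SimpleGraph.IsNeighborSetInterClosed, zdvGraph_neighborSet hB]

theorem nonempty_zdvGraph_iso_of_mulHom {S' : Type w} [CommSemigroupWithZero S'] (f : S →ₙ* S')
    (hf : Function.Injective f) (hf0 : ∀ x, f x = 0 ↔ x = 0)
    (hrange : ∀ t : ZDVertex S', (t : S') ∈ Set.range f) :
    Nonempty (zdvGraph S ≃g zdvGraph S') := by
  have hf00 : f 0 = 0 := (hf0 0).mpr rfl
  have hmul0 : ∀ x y : S, f x * f y = 0 ↔ x * y = 0 := fun x y => by rw [← map_mul, hf0]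
  let g : ZDVertex S → ZDVertex S' := fun a =>
    ⟨f a, (hf0 a).not.mpr a.2.1, by
      obtain ⟨y, hy, hay⟩ := a.2.2
      exact ⟨f y, (hf0 y).not.mpr hy, (hmul0 a y).mpr hay⟩⟩
  have hg : Function.Bijective g := by
    refine ⟨fun a b hab => Subtype.ext (hf (congrArg Subtype.val hab)), fun t => ?_⟩
    obtain ⟨u, hu, htu⟩ := t.2.2
    obtain ⟨x, hx⟩ := hrange t
    obtain ⟨y, rfl⟩ := hrange ⟨u, hu, t, t.2.1, by rw [mul_comm, htu]⟩
    have hx0 : x ≠ 0 := fun h => t.2.1 (by rw [← hx, h, hf00])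
    have hy0 : y ≠ 0 := fun h => hu (by rw [h, hf00])
    exact ⟨⟨x, hx0, y, hy0, (hmul0 x y).mp (by rw [hx]; exact htu)⟩, Subtype.ext hx⟩
  refine ⟨⟨Equiv.ofBijective g hg, fun {a b} => ?_⟩⟩
  change g a ≠ g b ∧ f a * f b = 0 ↔ a ≠ b ∧ (a : S) * b = 0
  rw [hg.1.ne_iff, hmul0]

end ZeroDivisorGraph

section CommMonoidWithZero

variable {T : Type u} [CommMonoidWithZero T]

theorem isVertex_mul_of_ne_zero (x : T) (v : ZDVertex T) (h : x * v ≠ 0) :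
    IsVertex T (x * v) := by
  obtain ⟨y, hy, hvy⟩ := v.2.2
  exact ⟨h, y, hy, by rw [mul_assoc, hvy, mul_zero]⟩

theorem vertexAnn_zero : vertexAnn (0 : T) = Set.univ :=
  Set.eq_univ_of_forall fun v => zero_mul (v : T)

theorem vertexAnn_one : vertexAnn (1 : T) = ∅ :=
  Set.eq_empty_of_forall_notMem fun v hv => v.2.1 (by rwa [mem_vertexAnn, one_mul] at hv)

theorem vertexAnn_nonempty (a : ZDVertex T) : (vertexAnn (a : T)).Nonempty := by
  obtain ⟨y, hy, hay⟩ := a.2.2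
  exact ⟨⟨y, hy, a, a.2.1, by rw [mul_comm, hay]⟩, hay⟩

theorem notMem_vertexAnn_self (hB : ∀ a : T, a * a = a) (a : ZDVertex T) :
    a ∉ vertexAnn (a : T) := by
  rw [mem_vertexAnn, hB]
  exact a.2.1

theorem vertexAnn_subset_mul_left (x y : T) : vertexAnn y ⊆ vertexAnn (x * y) :=
  fun v hv => by rw [mem_vertexAnn, mul_assoc, hv, mul_zero]

theorem vertexAnn_mul_inter_subset {a b c s : T}
    (h : vertexAnn b ∩ vertexAnn c ⊆ vertexAnn s) :
    vertexAnn (a * b) ∩ vertexAnn (a * c) ⊆ vertexAnn (a * s) := by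
  rintro v ⟨hb, hc⟩
  rw [mem_vertexAnn] at hb hc ⊢
  by_cases hav : a * v = 0
  · rw [mul_right_comm, hav, zero_mul]
  · have hw : (⟨a * v, isVertex_mul_of_ne_zero a v hav⟩ : ZDVertex T) ∈ vertexAnn s :=
      h ⟨by rw [mem_vertexAnn, mul_left_comm, ← mul_assoc, hb],
        by rw [mem_vertexAnn, mul_left_comm, ← mul_assoc, hc]⟩
    rw [mem_vertexAnn, mul_left_comm, ← mul_assoc] at hw
    exact hw

theorem vertexAnn_mul_subset_of_disjoint {a a' : ZDVertex T} {c : T} (haa' : (a : T) * a' = 0)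
    (hd : Disjoint (vertexAnn (a : T)) (vertexAnn (a' : T)))
    (h : vertexAnn (a : T) ⊆ vertexAnn c) : vertexAnn (c * a) ⊆ vertexAnn c := by
  intro v hv
  by_contra hcv
  have hca' : c * a' = 0 := h haa'
  let w : ZDVertex T := ⟨c * v, isVertex_mul_of_ne_zero c v hcv⟩
  have hwa : w ∈ vertexAnn (a : T) := by
    rw [mem_vertexAnn, mul_left_comm, ← mul_assoc]
    exact hv
  have hwa' : w ∈ vertexAnn (a' : T) := by
    rw [mem_vertexAnn, mul_left_comm, ← mul_assoc, hca', zero_mul]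
  exact Set.disjoint_left.mp hd hwa hwa'

end CommMonoidWithZero

namespace BooleanRing

variable {R : Type u} [BooleanRing R]

theorem mul_eq_right_of_vertexAnn_subset {a b : ZDVertex R}
    (h : vertexAnn (a : R) ⊆ vertexAnn (b : R)) : (a : R) * b = b := by
  by_contra hne
  have hw : (b : R) * (1 + a) ≠ 0 := fun h0 =>
    hne (by linear_combination -h0 + add_self ((a : R) * b))
  have hwa : (b : R) * (1 + a) * a = 0 := by linear_combination (b : R) * mul_one_add_self (a : R)
  let w : ZDVertex R := ⟨_, hw, a, a.2.1, hwa⟩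
  have hbw : (b : R) * w = 0 := h (show (a : R) * w = 0 by linear_combination hwa)
  exact hw (by linear_combination hbw - (1 + (a : R)) * mul_self (b : R))

theorem vertexAnn_injective : Function.Injective fun a : ZDVertex R => vertexAnn (a : R) := by
  intro a b h
  have hab := mul_eq_right_of_vertexAnn_subset h.subset
  have hba := mul_eq_right_of_vertexAnn_subset h.symm.subset
  exact Subtype.ext (by linear_combination hab - hba)

theorem exists_mul_eq_zero_disjoint (a : ZDVertex R) : ∃ b : ZDVertex R,
    (a : R) * b = 0 ∧ Disjoint (vertexAnn (a : R)) (vertexAnn (b : R)) := by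
  obtain ⟨y, hy, hay⟩ := a.2.2
  have h1a : (1 : R) + a ≠ 0 := fun h => hy (by linear_combination y * h - hay)
  refine ⟨⟨1 + a, h1a, a, a.2.1, by linear_combination mul_one_add_self (a : R)⟩,
    mul_one_add_self (a : R), Set.disjoint_left.mpr fun v hav hbv => ?_⟩
  rw [mem_vertexAnn] at hav hbv
  exact v.2.1 (by linear_combination hbv - hav)

theorem eq_one_add_of_mul_eq_zero_of_disjoint {a b : ZDVertex R} (hab : (a : R) * b = 0)
    (hd : Disjoint (vertexAnn (a : R)) (vertexAnn (b : R))) : (b : R) = 1 + a := by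
  by_contra hne
  have hw : (1 : R) + a + b ≠ 0 := fun h => hne (by linear_combination h - add_self (1 + (a : R)))
  have hwa : ((1 : R) + a + b) * a = 0 := by linear_combination mul_one_add_self (a : R) + hab
  let w : ZDVertex R := ⟨_, hw, a, a.2.1, hwa⟩
  have hwb : (b : R) * w = 0 := by
    linear_combination mul_self (b : R) + add_self (b : R) + hab
  exact Set.disjoint_left.mp hd (show (a : R) * w = 0 by linear_combination hwa) hwb

theorem exists_vertexAnn_eq_inter {a b : ZDVertex R}
    (h : (vertexAnn (a : R) ∩ vertexAnn (b : R)).Nonempty) :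
    ∃ c : ZDVertex R, vertexAnn (c : R) = vertexAnn (a : R) ∩ vertexAnn (b : R) := by
  obtain ⟨v, hav, hbv⟩ := h
  rw [mem_vertexAnn] at hav hbv
  have has : (a : R) * (a + b + a * b) = a := by
    linear_combination (1 + (b : R)) * mul_self (a : R) + add_self ((a : R) * b)
  have hbs : (b : R) * (a + b + a * b) = b := by
    linear_combination (1 + (a : R)) * mul_self (b : R) + add_self ((a : R) * b)
  have hs : (a : R) + b + a * b ≠ 0 := fun h => a.2.1 (by rw [← has, h, mul_zero])
  refine ⟨⟨_, hs, v, v.2.1, by linear_combination (1 + (b : R)) * hav + hbv⟩, ?_⟩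
  ext v
  simp only [Set.mem_inter_iff, mem_vertexAnn]
  constructor
  · intro hsv
    exact ⟨by rw [← has, mul_assoc, hsv, mul_zero], by rw [← hbs, mul_assoc, hsv, mul_zero]⟩
  · rintro ⟨hav, hbv⟩
    linear_combination (1 + (b : R)) * hav + hbv

variable (R)

theorem isUniquelyDetermined_zdvGraph : (zdvGraph R).IsUniquelyDetermined :=
  (zdvGraph_isUniquelyDetermined_iff (S := R) mul_self).mpr vertexAnn_injective

theorem isUniquelyComplemented_zdvGraph : (zdvGraph R).IsUniquelyComplemented := by
  simp only [SimpleGraph.IsUniquelyComplemented, SimpleGraph.IsComplemented,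
    perp_zdvGraph_iff (S := R) mul_self]
  refine ⟨exists_mul_eq_zero_disjoint, fun a b c hab hac => ?_⟩
  rw [Subtype.ext (eq_one_add_of_mul_eq_zero_of_disjoint hab.1 hab.2 |>.trans
    (eq_one_add_of_mul_eq_zero_of_disjoint hac.1 hac.2).symm)]

theorem isNeighborSetInterClosed_zdvGraph : (zdvGraph R).IsNeighborSetInterClosed :=
  (zdvGraph_isNeighborSetInterClosed_iff (S := R) mul_self).mpr fun _ _ => exists_vertexAnn_eq_inter

end BooleanRing

def zdSubmonoid (T : Type u) [CommMonoidWithZero T] : Submonoid T where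
  carrier := {x | x = 0 ∨ x = 1 ∨ IsVertex T x}
  mul_mem' := by
    rintro x y (rfl | rfl | hx) hy
    · exact Or.inl (zero_mul y)
    · rwa [one_mul]
    · by_cases hxy : x * y = 0
      · exact Or.inl hxy
      · rw [mul_comm] at hxy ⊢
        exact Or.inr (Or.inr (isVertex_mul_of_ne_zero y ⟨x, hx⟩ hxy))
  one_mem' := Or.inr (Or.inl rfl)

namespace zdSubmonoid

variable {T : Type u} [CommMonoidWithZero T]

theorem zero_mem : (0 : T) ∈ zdSubmonoid T := Or.inl rfl

theorem vertex_mem (v : ZDVertex T) : (v : T) ∈ zdSubmonoid T := Or.inr (Or.inr v.2)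

theorem vertexAnn_injOn (hB : ∀ a : T, a * a = a) [Nonempty (ZDVertex T)]
    (h1 : Function.Injective fun a : ZDVertex T => vertexAnn (a : T)) :
    Set.InjOn vertexAnn (zdSubmonoid T : Set T) := by
  have univ_ne_empty : (Set.univ : Set (ZDVertex T)) ≠ ∅ := Set.univ_nonempty.ne_empty
  have eq_zero : ∀ b ∈ zdSubmonoid T, vertexAnn b = Set.univ → b = 0 := by
    rintro b (rfl | rfl | hb) h
    · rfl
    · exact absurd (vertexAnn_one.symm.trans h) univ_ne_empty.symm
    · exact absurd (h ▸ Set.mem_univ _) (notMem_vertexAnn_self hB ⟨b, hb⟩)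
  have eq_one : ∀ b ∈ zdSubmonoid T, vertexAnn b = ∅ → b = 1 := by
    rintro b (rfl | rfl | hb) h
    · exact absurd (vertexAnn_zero.symm.trans h) univ_ne_empty
    · rfl
    · exact absurd h (vertexAnn_nonempty ⟨b, hb⟩).ne_empty
  rintro a (rfl | rfl | ha) b hb h
  · exact (eq_zero b hb (h.symm.trans vertexAnn_zero)).symm
  · exact (eq_one b hb (h.symm.trans vertexAnn_one)).symm
  · rcases hb with rfl | rfl | hb
    · exact absurd (eq_zero a (vertex_mem ⟨a, ha⟩) (h.trans vertexAnn_zero)) ha.1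
    · exact absurd (h.trans vertexAnn_one) (vertexAnn_nonempty ⟨a, ha⟩).ne_empty
    · exact Subtype.ext_iff.mp (h1 (a₁ := ⟨a, ha⟩) (a₂ := ⟨b, hb⟩) h)

theorem vertexAnn_mul_subset (h2 : ∀ a : ZDVertex T, ∃ b : ZDVertex T,
      (a : T) * b = 0 ∧ Disjoint (vertexAnn (a : T)) (vertexAnn (b : T)))
    {a c : T} (ha : a ∈ zdSubmonoid T) (h : vertexAnn a ⊆ vertexAnn c) :
    vertexAnn (c * a) ⊆ vertexAnn c := by
  rcases ha with rfl | rfl | ha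
  · rwa [mul_zero]
  · rw [mul_one]
  · obtain ⟨a', haa', hd⟩ := h2 ⟨a, ha⟩
    exact vertexAnn_mul_subset_of_disjoint haa' hd h

theorem vertexAnn_subset_iff (hB : ∀ a : T, a * a = a) [Nonempty (ZDVertex T)]
    (h1 : Function.Injective fun a : ZDVertex T => vertexAnn (a : T))
    (h2 : ∀ a : ZDVertex T, ∃ b : ZDVertex T,
      (a : T) * b = 0 ∧ Disjoint (vertexAnn (a : T)) (vertexAnn (b : T)))
    {a b : T} (ha : a ∈ zdSubmonoid T) (hb : b ∈ zdSubmonoid T) :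
    vertexAnn a ⊆ vertexAnn b ↔ a * b = b := by
  refine ⟨fun h => vertexAnn_injOn hB h1 (mul_mem ha hb) hb ?_, fun h => ?_⟩
  · refine Set.Subset.antisymm ?_ (vertexAnn_subset_mul_left a b)
    rw [mul_comm]
    exact vertexAnn_mul_subset h2 ha h
  · rw [← h, mul_comm]
    exact vertexAnn_subset_mul_left b a

theorem exists_vertexAnn_eq_inter
    (h3 : ∀ a b : ZDVertex T, (vertexAnn (a : T) ∩ vertexAnn (b : T)).Nonempty →
      ∃ c : ZDVertex T, vertexAnn (c : T) = vertexAnn (a : T) ∩ vertexAnn (b : T))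
    {a b : T} (ha : a ∈ zdSubmonoid T) (hb : b ∈ zdSubmonoid T) :
    ∃ c ∈ zdSubmonoid T, vertexAnn c = vertexAnn a ∩ vertexAnn b := by
  rcases ha with rfl | rfl | ha
  · exact ⟨b, hb, by rw [vertexAnn_zero, Set.univ_inter]⟩
  · exact ⟨1, one_mem _, by rw [vertexAnn_one, Set.empty_inter]⟩
  rcases hb with rfl | rfl | hb
  · exact ⟨a, vertex_mem ⟨a, ha⟩, by rw [vertexAnn_zero, Set.inter_univ]⟩
  · exact ⟨1, one_mem _, by rw [vertexAnn_one, Set.inter_empty]⟩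
  by_cases hab : (vertexAnn a ∩ vertexAnn b).Nonempty
  · obtain ⟨c, hc⟩ := h3 ⟨a, ha⟩ ⟨b, hb⟩ hab
    exact ⟨c, vertex_mem c, hc⟩
  · exact ⟨1, one_mem _, by rw [vertexAnn_one, Set.not_nonempty_iff_eq_empty.mp hab]⟩

theorem exists_mul_eq_zero_disjoint
    (h2 : ∀ a : ZDVertex T, ∃ b : ZDVertex T,
      (a : T) * b = 0 ∧ Disjoint (vertexAnn (a : T)) (vertexAnn (b : T)))
    {a : T} (ha : a ∈ zdSubmonoid T) :
    ∃ b ∈ zdSubmonoid T, a * b = 0 ∧ Disjoint (vertexAnn a) (vertexAnn b) := by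
  rcases ha with rfl | rfl | ha
  · exact ⟨1, one_mem _, zero_mul 1, by rw [vertexAnn_one]; exact Set.disjoint_empty _⟩
  · exact ⟨0, zero_mem, mul_zero 1, by rw [vertexAnn_one]; exact Set.empty_disjoint _⟩
  · obtain ⟨b, hab, hd⟩ := h2 ⟨a, ha⟩
    exact ⟨b, vertex_mem b, hab, hd⟩


noncomputable abbrev booleanAlgebra (hB : ∀ a : T, a * a = a) [Nonempty (ZDVertex T)]
    (h1 : Function.Injective fun a : ZDVertex T => vertexAnn (a : T))
    (h2 : ∀ a : ZDVertex T, ∃ b : ZDVertex T,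
      (a : T) * b = 0 ∧ Disjoint (vertexAnn (a : T)) (vertexAnn (b : T)))
    (h3 : ∀ a b : ZDVertex T, (vertexAnn (a : T) ∩ vertexAnn (b : T)).Nonempty →
      ∃ c : ZDVertex T, vertexAnn (c : T) = vertexAnn (a : T) ∩ vertexAnn (b : T)) :
    BooleanAlgebra (zdSubmonoid T) :=
  letI : SemilatticeInf (zdSubmonoid T) :=
    @SemilatticeInf.mk' _ ⟨(· * ·)⟩ mul_comm mul_assoc fun a => Subtype.ext (hB a)
  have le_iff (a b : zdSubmonoid T) : a ≤ b ↔ vertexAnn (b : T) ⊆ vertexAnn (a : T) :=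
    ((vertexAnn_subset_iff hB h1 h2 b.2 a.2).trans (Subtype.ext_iff (a1 := b ⊓ a)).symm).symm
  let sup (a b : zdSubmonoid T) : zdSubmonoid T :=
    ⟨_, (exists_vertexAnn_eq_inter h3 a.2 b.2).choose_spec.1⟩
  have vertexAnn_sup (a b : zdSubmonoid T) :
      vertexAnn (sup a b : T) = vertexAnn (a : T) ∩ vertexAnn (b : T) :=
    (exists_vertexAnn_eq_inter h3 a.2 b.2).choose_spec.2
  letI : Lattice (zdSubmonoid T) :=
    { sup := sup
      le_sup_left := fun a b => (le_iff _ _).mpr ((vertexAnn_sup a b).trans_subset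
        Set.inter_subset_left)
      le_sup_right := fun a b => (le_iff _ _).mpr ((vertexAnn_sup a b).trans_subset
        Set.inter_subset_right)
      sup_le := fun a b c hac hbc => (le_iff _ _).mpr
        ((Set.subset_inter ((le_iff _ _).mp hac) ((le_iff _ _).mp hbc)).trans_eq
          (vertexAnn_sup a b).symm) }
  letI : DistribLattice (zdSubmonoid T) := .ofInfSupLe fun a b c => (le_iff _ _).mpr <|
    (vertexAnn_sup _ _).trans_subset (vertexAnn_mul_inter_subset (vertexAnn_sup b c).superset)
  letI : BoundedOrder (zdSubmonoid T) :=
    { top := 1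
      le_top := one_mul
      bot := ⟨0, zero_mem⟩
      bot_le := fun a => Subtype.ext (mul_zero (a : T)) }
  haveI : ComplementedLattice (zdSubmonoid T) := ⟨fun a => by
    obtain ⟨b, hb, hab, hd⟩ := exists_mul_eq_zero_disjoint h2 a.2
    refine ⟨⟨b, hb⟩, disjoint_iff.mpr (Subtype.ext hab), codisjoint_iff.mpr ?_⟩
    exact Subtype.ext <| vertexAnn_injOn hB h1 (sup a ⟨b, hb⟩).2 (one_mem _)
      ((vertexAnn_sup a ⟨b, hb⟩).trans (hd.inter_eq.trans vertexAnn_one.symm))⟩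
  DistribLattice.booleanAlgebraOfComplemented _

theorem exists_booleanRing_iso_zdvGraph (hB : ∀ a : T, a * a = a) [Nonempty (ZDVertex T)]
    (h1 : (zdvGraph T).IsUniquelyDetermined) (h2 : (zdvGraph T).IsComplemented)
    (h3 : (zdvGraph T).IsNeighborSetInterClosed) :
    ∃ (R : Type u) (_ : BooleanRing R), Nonempty (zdvGraph R ≃g zdvGraph T) := by
  simp only [SimpleGraph.IsComplemented, perp_zdvGraph_iff hB] at h2
  let _ := booleanAlgebra hB ((zdvGraph_isUniquelyDetermined_iff hB).mp h1) h2
    ((zdvGraph_isNeighborSetInterClosed_iff hB).mp h3)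
  let f : AsBoolRing (zdSubmonoid T) →ₙ* T :=
    { toFun := fun x => ((ofBoolRing x : zdSubmonoid T) : T)
      map_mul' := fun x y => by rw [ofBoolRing_mul]; rfl }
  refine ⟨_, inferInstance, nonempty_zdvGraph_iso_of_mulHom f
    (fun x y h => ofBoolRing.injective (Subtype.ext h)) (fun x => ?_)
    (fun t => ⟨toBoolRing ⟨t, vertex_mem t⟩, rfl⟩)⟩
  change ((ofBoolRing x : zdSubmonoid T) : T) = ((⊥ : zdSubmonoid T) : T) ↔ _
  rw [← Subtype.ext_iff, ← ofBoolRing_zero, ofBoolRing_inj]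

end zdSubmonoid

namespace WithOne

variable {S : Type u} [CommSemigroupWithZero S]

instance : CommMonoidWithZero (WithOne S) where
  zero := ((0 : S) : WithOne S)
  zero_mul a := by
    induction a using WithOne.recOneCoe with
    | one => exact mul_one _
    | coe x => exact congrArg _ (CommSemigroupWithZero.zero_mul' x)
  mul_zero a := by
    induction a using WithOne.recOneCoe with
    | one => exact one_mul _
    | coe x => exact congrArg _ (mul_comm x 0 ▸ CommSemigroupWithZero.zero_mul' x)

theorem coe_eq_zero {x : S} : (x : WithOne S) = 0 ↔ x = 0 := coe_inj

theorem mul_self_of_mul_self (hB : ∀ a : S, a * a = a) (a : WithOne S) : a * a = a := by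
  induction a using WithOne.recOneCoe with
  | one => exact mul_one 1
  | coe x => rw [← coe_mul, hB]

theorem nonempty_zdvGraph_iso : Nonempty (zdvGraph S ≃g zdvGraph (WithOne S)) := by
  refine nonempty_zdvGraph_iso_of_mulHom coeMulHom coe_injective (fun _ => coe_eq_zero)
    fun t => ?_
  obtain ⟨u, hu, htu⟩ := t.2.2
  refine ne_one_iff_exists.mp fun ht => hu ?_
  rwa [ht, one_mul] at htu

end WithOne

theorem exists_booleanRing_iso_zdvGraph {S : Type u} [CommSemigroupWithZero S]
    (hB : ∀ a : S, a * a = a) [Nonempty (ZDVertex S)]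
    (h1 : (zdvGraph S).IsUniquelyDetermined) (h2 : (zdvGraph S).IsComplemented)
    (h3 : (zdvGraph S).IsNeighborSetInterClosed) :
    ∃ (R : Type u) (_ : BooleanRing R), Nonempty (zdvGraph R ≃g zdvGraph S) := by
  obtain ⟨e⟩ := WithOne.nonempty_zdvGraph_iso (S := S)
  have : Nonempty (ZDVertex (WithOne S)) := Nonempty.map e inferInstance
  obtain ⟨R, _, ⟨f⟩⟩ := zdSubmonoid.exists_booleanRing_iso_zdvGraph
    (WithOne.mul_self_of_mul_self hB) (h1.of_iso e) (h2.of_iso e) (h3.of_iso e)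
  exact ⟨R, inferInstance, ⟨f.trans e.symm⟩⟩

/-- Theorem 3.7: a nonempty connected simple graph `G` is a Boolean graph (the zero-divisor
graph of some Boolean ring) iff (1) `G` is uniquely determined by neighbourhoods,
(2) `G` is uniquely complemented, (3) any nonempty intersection of two neighbourhoods is a
neighbourhood, and (4) `G` is the zero-divisor graph of some Boolean semigroup. -/
theorem stmt19 {α : Type v} (G : SimpleGraph α) (hG : G.Connected) :
    (∃ (R : Type u) (inst : BooleanRing R), Nonempty ((@zdvGraphRing R inst) ≃g G)) ↔
    ((∀ x y : α, G.neighborSet x = G.neighborSet y → x = y) ∧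
     ((∀ x : α, ∃ y : α, Perp G x y) ∧
       (∀ x y z : α, Perp G x y → Perp G x z → G.neighborSet y = G.neighborSet z)) ∧
     (∀ x y : α, (G.neighborSet x ∩ G.neighborSet y).Nonempty →
       ∃ z : α, G.neighborSet z = G.neighborSet x ∩ G.neighborSet y) ∧
     (∃ (S : Type u) (inst : CommSemigroupWithZero S),
       (∀ a : S, a * a = a) ∧ Nonempty ((@zdvGraph S inst) ≃g G))) := by
  change _ ↔
    G.IsUniquelyDetermined ∧ G.IsUniquelyComplemented ∧ G.IsNeighborSetInterClosed ∧ _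
  constructor
  · rintro ⟨R, _, ⟨f⟩⟩
    exact ⟨(BooleanRing.isUniquelyDetermined_zdvGraph R).of_iso f,
      (BooleanRing.isUniquelyComplemented_zdvGraph R).of_iso f,
      (BooleanRing.isNeighborSetInterClosed_zdvGraph R).of_iso f,
      R, inferInstance, BooleanRing.mul_self, ⟨f⟩⟩
  · rintro ⟨h1, h2, h3, S, _, hB, ⟨e⟩⟩
    have : Nonempty (ZDVertex S) := hG.nonempty.map e.symm
    obtain ⟨R, _, ⟨f⟩⟩ := exists_booleanRing_iso_zdvGraph hB (h1.of_iso e.symm)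
      (h2.1.of_iso e.symm) (h3.of_iso e.symm)
    exact ⟨R, inferInstance, ⟨f.trans e⟩⟩
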